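/- Assume Assumption (F), assume in addition that F is four times continuously differentiable with |F⁽³⁾(x)| + |F⁽⁴⁾(x)| ≤ L(1 + x^γ + x^{−γ}) for all x > 0 for some L > 0 and γ > 0, and let H : [0,∞) → (0,∞) be continuously differentiable with ∫_ℝ F(e^{√y t}/H(y)) dN(t) = 0 for all y ≥ 0, where N is the standard Gaussian (normal N(0,1)) probability measure on ℝ. Then lim_{y → 0⁺} (2√y)^{−1} ∫_ℝ e^{3√y t} F⁽³⁾(e^{√y t}/H(y)) · t dN(t) = (3/2)F⁽³⁾(1) + (1/2)F⁽⁴⁾(1). -/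

import Mathlib

open MeasureTheory ProbabilityTheory Set Filter


open MeasureTheory ProbabilityTheory Set Filter Real Topology
open scoped NNReal ENNReal

noncomputable def gpdf : ℝ → ℝ := gaussianPDFReal 0 1

lemma gpdf_eq (t : ℝ) : gpdf t = (Real.sqrt (2*π))⁻¹ * rexp (-t^2/2) := by
  simp [gpdf, gaussianPDFReal]

lemma gpdf_nonneg (t : ℝ) : 0 ≤ gpdf t := gaussianPDFReal_nonneg 0 1 t

lemma continuous_gpdf : Continuous gpdf := by
  have : gpdf = fun t => (Real.sqrt (2*π))⁻¹ * rexp (-t^2/2) := funext gpdf_eq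
  rw [this]; fun_prop

lemma hasDerivAt_gpdf (t : ℝ) : HasDerivAt gpdf (-t * gpdf t) t := by
  have h1 : HasDerivAt (fun x : ℝ => -x^2/2) (-t) t := by
    have := ((hasDerivAt_pow 2 t).neg).div_const 2
    refine this.congr_deriv ?_
    norm_num; ring
  have h2 := (h1.exp).const_mul ((Real.sqrt (2*π))⁻¹)
  have hg : gpdf = fun x => (Real.sqrt (2*π))⁻¹ * rexp (-x^2/2) := funext gpdf_eq
  have heq : -t * gpdf t = (Real.sqrt (2*π))⁻¹ * (rexp (-t^2/2) * -t) := by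
    rw [gpdf_eq]; ring
  rw [heq, hg]
  exact h2

lemma exp_le_E {c a : ℝ} (h : |c| ≤ a) (t : ℝ) :
    rexp (c*t) ≤ rexp (a*t) + rexp (-(a*t)) := by
  obtain ⟨h1, h2⟩ := abs_le.mp h
  rcases le_total 0 t with ht | ht
  · have : c*t ≤ a*t := mul_le_mul_of_nonneg_right h2 ht
    exact (Real.exp_le_exp.mpr this).trans (le_add_of_nonneg_right (Real.exp_pos _).le)
  · have : c*t ≤ -(a*t) := by nlinarith
    exact (Real.exp_le_exp.mpr this).trans (le_add_of_nonneg_left (Real.exp_pos _).le)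

lemma abs_le_E (t : ℝ) : |t| ≤ rexp (1*t) + rexp (-(1*t)) := by
  have h1 : |t| ≤ rexp |t| := by nlinarith [Real.add_one_le_exp |t|]
  rcases le_total 0 t with ht | ht
  · rw [abs_of_nonneg ht] at h1 ⊢
    exact h1.trans (by rw [one_mul]; exact le_add_of_nonneg_right (Real.exp_pos _).le)
  · rw [abs_of_nonpos ht] at h1 ⊢
    exact h1.trans (by rw [one_mul]; exact le_add_of_nonneg_left (Real.exp_pos _).le)

lemma exp_mul_gpdf_eq (c t : ℝ) :
    rexp (c*t) * gpdf t = ((Real.sqrt (2*π))⁻¹ * rexp (c^2/2)) * rexp (-2⁻¹*(t-c)^2) := by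
  rw [gpdf_eq, mul_comm (rexp (c*t)), mul_assoc, ← Real.exp_add, mul_assoc, ← Real.exp_add]
  congr 1
  ring

lemma integrable_exp_mul_gpdf (c : ℝ) : Integrable (fun t => rexp (c*t) * gpdf t) := by
  have h0 : Integrable (fun x : ℝ => rexp (-2⁻¹ * x^2)) := integrable_exp_neg_mul_sq (by norm_num)
  have h1 : Integrable (fun t : ℝ => rexp (-2⁻¹ * (t - c)^2)) := h0.comp_sub_right c
  have h2 := h1.const_mul ((Real.sqrt (2*π))⁻¹ * rexp (c^2/2))
  exact h2.congr (Eventually.of_forall fun t => (exp_mul_gpdf_eq c t).symm)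

lemma integrable_E_gpdf (a : ℝ) :
    Integrable (fun t => (rexp (a*t) + rexp (-(a*t))) * gpdf t) := by
  have h := (integrable_exp_mul_gpdf a).add (integrable_exp_mul_gpdf (-a))
  refine h.congr (Eventually.of_forall fun t => ?_)
  simp [add_mul, neg_mul]

lemma integrable_dominated {g : ℝ → ℝ} (hm : AEStronglyMeasurable g volume) {C a : ℝ}
    (hb : ∀ t, |g t| ≤ C * (rexp (a*t) + rexp (-(a*t)))) :
    Integrable (fun t => g t * gpdf t) := by
  refine Integrable.mono' ((integrable_E_gpdf a).const_mul C)
    (hm.mul continuous_gpdf.aestronglyMeasurable) (Eventually.of_forall fun t => ?_)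
  rw [Real.norm_eq_abs, abs_mul, abs_of_nonneg (gpdf_nonneg t)]
  calc |g t| * gpdf t ≤ (C * (rexp (a*t) + rexp (-(a*t)))) * gpdf t :=
        mul_le_mul_of_nonneg_right (hb t) (gpdf_nonneg t)
    _ = C * ((rexp (a*t) + rexp (-(a*t))) * gpdf t) := by ring

lemma tendsto_exp_mul_gpdf_atTop (c : ℝ) :
    Tendsto (fun t => rexp (c*t) * gpdf t) atTop (𝓝 0) := by
  have h1 : Tendsto (fun t:ℝ => (t-c)^2) atTop atTop := by
    have h := tendsto_atTop_add_const_right atTop (-c) (tendsto_id (α := ℝ))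
    simpa [sq, sub_eq_add_neg] using h.atTop_mul_atTop₀ h
  have h2 : Tendsto (fun t:ℝ => rexp (-2⁻¹*(t-c)^2)) atTop (𝓝 0) := by
    apply Real.tendsto_exp_atBot.comp
    have : (fun t:ℝ => -2⁻¹*(t-c)^2) = fun t => -(2⁻¹*(t-c)^2) := by funext t; ring
    rw [this]
    exact tendsto_neg_atBot_iff.mpr (h1.const_mul_atTop (by norm_num))
  have h3 := h2.const_mul ((Real.sqrt (2*π))⁻¹ * rexp (c^2/2))
  rw [mul_zero] at h3
  exact h3.congr fun t => (exp_mul_gpdf_eq c t).symm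

lemma tendsto_exp_mul_gpdf_atBot (c : ℝ) :
    Tendsto (fun t => rexp (c*t) * gpdf t) atBot (𝓝 0) := by
  have h1 : Tendsto (fun t:ℝ => (t-c)^2) atBot atTop := by
    have h : Tendsto (fun t:ℝ => t - c) atBot atBot :=
      tendsto_atBot_add_const_right atBot (-c) (tendsto_id (α := ℝ))
    simpa [sq] using h.atBot_mul_atBot₀ h
  have h2 : Tendsto (fun t:ℝ => rexp (-2⁻¹*(t-c)^2)) atBot (𝓝 0) := by
    apply Real.tendsto_exp_atBot.comp
    have : (fun t:ℝ => -2⁻¹*(t-c)^2) = fun t => -(2⁻¹*(t-c)^2) := by funext t; ring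
    rw [this]
    exact tendsto_neg_atBot_iff.mpr (h1.const_mul_atTop (by norm_num))
  have h3 := h2.const_mul ((Real.sqrt (2*π))⁻¹ * rexp (c^2/2))
  rw [mul_zero] at h3
  exact h3.congr fun t => (exp_mul_gpdf_eq c t).symm

lemma integral_gaussian_eq (g : ℝ → ℝ) :
    ∫ t, g t ∂(gaussianReal 0 1) = ∫ t, g t * gpdf t := by
  rw [gaussianReal_of_var_ne_zero 0 one_ne_zero]
  have hd : gaussianPDF 0 1 = fun x => ((Real.toNNReal (gaussianPDFReal 0 1 x) : ℝ≥0) : ℝ≥0∞) := by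
    funext x; rfl
  rw [hd, integral_withDensity_eq_integral_smul (measurable_gaussianPDFReal 0 1).real_toNNReal]
  congr 1; funext x
  rw [NNReal.smul_def, smul_eq_mul, Real.coe_toNNReal _ (gaussianPDFReal_nonneg 0 1 x), mul_comm]
  rfl

lemma exp_mul_E_le {b γ : ℝ} (hγ : 0 ≤ γ) (hb : |b| ≤ 4) (t : ℝ) :
    rexp (b*t) * (rexp (γ*t) + rexp (-(γ*t))) ≤
      2 * (rexp ((4+γ)*t) + rexp (-((4+γ)*t))) := by
  obtain ⟨hb1, hb2⟩ := abs_le.mp hb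
  rw [mul_add, ← Real.exp_add, ← Real.exp_add]
  have q1 : rexp (b*t + γ*t) ≤ rexp ((4+γ)*t) + rexp (-((4+γ)*t)) := by
    rw [show b*t + γ*t = (b+γ)*t by ring]
    exact exp_le_E (abs_le.mpr ⟨by linarith, by linarith⟩) t
  have q2 : rexp (b*t + -(γ*t)) ≤ rexp ((4+γ)*t) + rexp (-((4+γ)*t)) := by
    rw [show b*t + -(γ*t) = (b-γ)*t by ring]
    exact exp_le_E (abs_le.mpr ⟨by linarith, by linarith⟩) t
  linarith

lemma stein {g g' : ℝ → ℝ} (hg : ∀ t, HasDerivAt g (g' t) t) {C a : ℝ} (ha : 0 ≤ a)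
    (hb : ∀ t, |g t| + |g' t| ≤ C * (rexp (a*t) + rexp (-(a*t)))) :
    ∫ t, (g t * t) * gpdf t = ∫ t, g' t * gpdf t := by
  have hgc : Continuous g := continuous_iff_continuousAt.mpr fun t => (hg t).continuousAt
  have hg'm : AEStronglyMeasurable g' volume := by
    have hdg : g' = deriv g := funext fun t => ((hg t).deriv).symm
    rw [hdg]; exact (measurable_deriv g).aestronglyMeasurable
  have hbg : ∀ t, |g t| ≤ C * (rexp (a*t) + rexp (-(a*t))) := fun t =>
    le_trans (le_add_of_nonneg_right (abs_nonneg _)) (hb t)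
  have hbg' : ∀ t, |g' t| ≤ C * (rexp (a*t) + rexp (-(a*t))) := fun t =>
    le_trans (le_add_of_nonneg_left (abs_nonneg _)) (hb t)
  have hC : 0 ≤ C := by
    have h0 := hb 0
    simp only [mul_zero, neg_zero, Real.exp_zero] at h0
    nlinarith [abs_nonneg (g 0), abs_nonneg (g' 0)]
  have int1 : Integrable (fun t => g' t * gpdf t) := integrable_dominated hg'm hbg'
  have hbgt : ∀ t, |g t * t| ≤ (4*C) * (rexp ((a+1)*t) + rexp (-((a+1)*t))) := by
    intro t
    have hEa0 : (0:ℝ) ≤ rexp (a*t) + rexp (-(a*t)) := by positivity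
    have key : (rexp (a*t) + rexp (-(a*t))) * (rexp (1*t) + rexp (-(1*t))) ≤
        4 * (rexp ((a+1)*t) + rexp (-((a+1)*t))) := by
      have e1 : rexp (a*t) * rexp (1*t) ≤ rexp ((a+1)*t) + rexp (-((a+1)*t)) := by
        rw [← Real.exp_add, show a*t + 1*t = (a+1)*t by ring]
        exact exp_le_E (by rw [abs_of_nonneg (by linarith)] ) t
      have e2 : rexp (a*t) * rexp (-(1*t)) ≤ rexp ((a+1)*t) + rexp (-((a+1)*t)) := by
        rw [← Real.exp_add, show a*t + -(1*t) = (a-1)*t by ring]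
        exact exp_le_E (abs_le.mpr ⟨by linarith, by linarith⟩) t
      have e3 : rexp (-(a*t)) * rexp (1*t) ≤ rexp ((a+1)*t) + rexp (-((a+1)*t)) := by
        rw [← Real.exp_add, show -(a*t) + 1*t = (1-a)*t by ring]
        exact exp_le_E (abs_le.mpr ⟨by linarith, by linarith⟩) t
      have e4 : rexp (-(a*t)) * rexp (-(1*t)) ≤ rexp ((a+1)*t) + rexp (-((a+1)*t)) := by
        rw [← Real.exp_add, show -(a*t) + -(1*t) = (-(a+1))*t by ring]
        exact exp_le_E (abs_le.mpr ⟨by linarith, by linarith⟩) t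
      calc (rexp (a*t) + rexp (-(a*t))) * (rexp (1*t) + rexp (-(1*t)))
          = rexp (a*t) * rexp (1*t) + rexp (a*t) * rexp (-(1*t))
            + (rexp (-(a*t)) * rexp (1*t) + rexp (-(a*t)) * rexp (-(1*t))) := by ring
        _ ≤ 4 * (rexp ((a+1)*t) + rexp (-((a+1)*t))) := by linarith
    calc |g t * t| = |g t| * |t| := abs_mul _ _
      _ ≤ (C * (rexp (a*t) + rexp (-(a*t)))) * (rexp (1*t) + rexp (-(1*t))) :=
          mul_le_mul (hbg t) (abs_le_E t) (abs_nonneg t) (by positivity)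
      _ = C * ((rexp (a*t) + rexp (-(a*t))) * (rexp (1*t) + rexp (-(1*t)))) := by ring
      _ ≤ C * (4 * (rexp ((a+1)*t) + rexp (-((a+1)*t)))) := mul_le_mul_of_nonneg_left key hC
      _ = (4*C) * (rexp ((a+1)*t) + rexp (-((a+1)*t))) := by ring
  have int2 : Integrable (fun t => (g t * t) * gpdf t) :=
    integrable_dominated ((hgc.mul continuous_id).aestronglyMeasurable) hbgt
  have hΦ : ∀ t, HasDerivAt (fun t => g t * gpdf t)
      (g' t * gpdf t - (g t * t) * gpdf t) t := by
    intro t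
    have := (hg t).mul (hasDerivAt_gpdf t)
    refine this.congr_deriv ?_
    ring
  have hnorm : ∀ t, ‖g t * gpdf t‖ ≤
      C * (rexp (a*t) * gpdf t + rexp (-(a*t)) * gpdf t) := by
    intro t
    rw [Real.norm_eq_abs, abs_mul, abs_of_nonneg (gpdf_nonneg t)]
    calc |g t| * gpdf t ≤ (C * (rexp (a*t) + rexp (-(a*t)))) * gpdf t :=
          mul_le_mul_of_nonneg_right (hbg t) (gpdf_nonneg t)
      _ = C * (rexp (a*t) * gpdf t + rexp (-(a*t)) * gpdf t) := by ring
  have hna : Tendsto (fun t => rexp (-(a*t)) * gpdf t) atTop (𝓝 0) :=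
    (tendsto_exp_mul_gpdf_atTop (-a)).congr fun t => by rw [neg_mul]
  have hnb : Tendsto (fun t => rexp (-(a*t)) * gpdf t) atBot (𝓝 0) :=
    (tendsto_exp_mul_gpdf_atBot (-a)).congr fun t => by rw [neg_mul]
  have hT : Tendsto (fun t => g t * gpdf t) atTop (𝓝 0) := by
    apply squeeze_zero_norm hnorm
    have := ((tendsto_exp_mul_gpdf_atTop a).add hna).const_mul C
    simpa using this
  have hB : Tendsto (fun t => g t * gpdf t) atBot (𝓝 0) := by
    apply squeeze_zero_norm hnorm
    have := ((tendsto_exp_mul_gpdf_atBot a).add hnb).const_mul C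
    simpa using this
  have hint : Integrable (fun t => g' t * gpdf t - (g t * t) * gpdf t) := int1.sub int2
  have h2 : ∫ t in Ioi (0:ℝ), (g' t * gpdf t - (g t * t) * gpdf t) = 0 - (g 0 * gpdf 0) :=
    integral_Ioi_of_hasDerivAt_of_tendsto ((hΦ 0).continuousAt.continuousWithinAt)
      (fun x _ => hΦ x) hint.integrableOn hT
  have h1 : ∫ t in Iic (0:ℝ), (g' t * gpdf t - (g t * t) * gpdf t) = (g 0 * gpdf 0) - 0 :=
    integral_Iic_of_hasDerivAt_of_tendsto ((hΦ 0).continuousAt.continuousWithinAt)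
      (fun x _ => hΦ x) hint.integrableOn hB
  have key : ∫ t, (g' t * gpdf t - (g t * t) * gpdf t) = 0 := by
    rw [← integral_add_compl (measurableSet_Iic : MeasurableSet (Iic (0:ℝ))) hint, compl_Iic,
      h1, h2]
    ring
  have hsub := integral_sub int1 int2
  rw [key] at hsub
  linarith [hsub]

set_option maxHeartbeats 1000000

/-- The L'Hôpital limit in the proof of Lemma 4.2:
`lim_{y→0⁺} (2√y)⁻¹ ∫ e^{3√y t} F⁽³⁾(e^{√y t}/H(y)) t dN(t) = (3/2)F⁽³⁾(1) + (1/2)F⁽⁴⁾(1)`. -/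
theorem stmt_19 (F F' F'' F3 F4 : ℝ → ℝ)
    (hdF : ∀ x > (0:ℝ), HasDerivAt F (F' x) x)
    (hdF' : ∀ x > (0:ℝ), HasDerivAt F' (F'' x) x)
    (hdF'' : ∀ x > (0:ℝ), HasDerivAt F'' (F3 x) x)
    (hdF3 : ∀ x > (0:ℝ), HasDerivAt F3 (F4 x) x)
    (hF4cont : ContinuousOn F4 (Ioi 0))
    (hF1 : F 1 = 0)
    (hF'pos : ∀ x > (0:ℝ), 0 < F' x)
    (hF''neg : ∀ x > (0:ℝ), F'' x < 0)
    (hgrowth : ∃ L : ℝ, 0 < L ∧ ∃ γ : ℝ, 0 < γ ∧ ∀ x > (0:ℝ),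
      |F x| + |F' x| + |F'' x| ≤ L * (1 + x ^ γ + x ^ (-γ)))
    (hgrowth34 : ∃ L : ℝ, 0 < L ∧ ∃ γ : ℝ, 0 < γ ∧ ∀ x > (0:ℝ),
      |F3 x| + |F4 x| ≤ L * (1 + x ^ γ + x ^ (-γ)))
    (H : ℝ → ℝ)
    (hHpos : ∀ y ∈ Ici (0:ℝ), 0 < H y)
    (hHC1 : ContDiffOn ℝ 1 H (Ici 0))
    (hHroot : ∀ y ∈ Ici (0:ℝ),
      (∫ t, F (Real.exp (Real.sqrt y * t) / H y) ∂(gaussianReal 0 1)) = 0) :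
    Tendsto (fun y : ℝ =>
        (2 * Real.sqrt y)⁻¹ *
          ∫ t, Real.exp (3 * Real.sqrt y * t) *
            F3 (Real.exp (Real.sqrt y * t) / H y) * t ∂(gaussianReal 0 1))
      (nhdsWithin 0 (Ioi 0)) (nhds ((3 / 2) * F3 1 + (1 / 2) * F4 1)) := by
  obtain ⟨L, hL, γ, hγ, hLb⟩ := hgrowth34
  set M := 3*L*(2:ℝ)^γ with hMdef
  have h2γ : (1:ℝ) ≤ (2:ℝ)^γ := Real.one_le_rpow (by norm_num) hγ.le
  have hM : 0 < M := by positivity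
  have hH00 : 0 < H 0 := hHpos 0 self_mem_Ici
  -- H 0 = 1
  have hH0 : H 0 = 1 := by
    have h0 := hHroot 0 self_mem_Ici
    simp only [Real.sqrt_zero, zero_mul, Real.exp_zero] at h0
    rw [integral_const] at h0
    simp only [measure_univ, probReal_univ, ENNReal.toReal_one, smul_eq_mul, one_mul] at h0
    have hmono : StrictMonoOn F (Ioi 0) := by
      apply strictMonoOn_of_deriv_pos (convex_Ioi 0)
      · exact fun x hx => (hdF x hx).continuousAt.continuousWithinAt
      · intro x hx
        rw [interior_Ioi] at hx
        rw [(hdF x hx).deriv]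
        exact hF'pos x hx
    have heq : (1:ℝ) / H 0 = 1 :=
      hmono.injOn (mem_Ioi.mpr (by positivity)) (mem_Ioi.mpr one_pos) (by rw [h0, hF1])
    rw [div_eq_one_iff_eq hH00.ne'] at heq
    exact heq.symm
  -- continuity facts
  have hHtend : Tendsto H (𝓝[>] (0:ℝ)) (𝓝 1) := by
    have h := (hHC1.continuousOn 0 self_mem_Ici)
    rw [ContinuousWithinAt, hH0] at h
    exact h.mono_left (nhdsWithin_mono 0 Ioi_subset_Ici_self)
  have hsqt : Tendsto (fun y : ℝ => Real.sqrt y) (𝓝[>] (0:ℝ)) (𝓝 0) := by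
    have h := Real.continuous_sqrt.tendsto 0
    rw [Real.sqrt_zero] at h
    exact h.mono_left nhdsWithin_le_nhds
  -- the key growth bound
  have keyb : ∀ y : ℝ, 0 < y → Real.sqrt y ≤ 1 → 1/2 < H y → H y < 2 → ∀ t : ℝ,
      |F3 (rexp (Real.sqrt y*t)/H y)| + |F4 (rexp (Real.sqrt y*t)/H y)| ≤
        M * (rexp (γ*t) + rexp (-(γ*t))) := by
    intro y hy hs1 hHy1 hHy2 t
    set s := Real.sqrt y with hsdef
    have hs0 : 0 ≤ s := Real.sqrt_nonneg y
    have hH : 0 < H y := by linarith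
    set u := rexp (s*t)/H y with hudef
    have hu0 : 0 < u := div_pos (Real.exp_pos _) hH
    have hb := hLb u hu0
    set Eγ := rexp (γ*t) + rexp (-(γ*t)) with hEγdef
    have hEγ0 : 0 ≤ Eγ := by positivity
    have hE1 : rexp ((s*γ)*t) ≤ Eγ :=
      exp_le_E (by rw [abs_of_nonneg (by positivity)]; nlinarith) t
    have hE2 : rexp ((-(s*γ))*t) ≤ Eγ :=
      exp_le_E (by rw [abs_neg, abs_of_nonneg (by positivity)]; nlinarith) t
    have hE0 : (1:ℝ) ≤ Eγ := by
      have h := exp_le_E (c := 0) (a := γ) (by simp [abs_of_nonneg, hγ.le]) t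
      simpa using h
    have e1' : u ^ γ ≤ (2:ℝ)^γ * rexp ((s*γ)*t) := by
      have hrw : u ^ γ = rexp ((s*γ)*t) / (H y)^γ := by
        rw [hudef, Real.div_rpow (Real.exp_pos _).le hH.le, ← Real.exp_mul,
          show s*t*γ = (s*γ)*t by ring]
      have hlow : ((2:ℝ)⁻¹)^γ ≤ (H y)^γ :=
        Real.rpow_le_rpow (by norm_num) (by linarith) hγ.le
      calc u ^ γ = rexp ((s*γ)*t) / (H y)^γ := hrw
        _ ≤ rexp ((s*γ)*t) / ((2:ℝ)⁻¹)^γ := by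
            gcongr
            all_goals first
              | exact Real.rpow_pos_of_pos (by norm_num) γ
              | exact hlow
        _ = (2:ℝ)^γ * rexp ((s*γ)*t) := by
            rw [Real.inv_rpow (by norm_num), div_eq_mul_inv, inv_inv, mul_comm]
    have e2' : u ^ (-γ) ≤ (2:ℝ)^γ * rexp ((-(s*γ))*t) := by
      have hrw : u ^ (-γ) = rexp ((-(s*γ))*t) * (H y)^γ := by
        rw [hudef, Real.div_rpow (Real.exp_pos _).le hH.le, ← Real.exp_mul,
          Real.rpow_neg hH.le, div_eq_mul_inv, inv_inv, show s*t*(-γ) = (-(s*γ))*t by ring]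
      have hup : (H y)^γ ≤ (2:ℝ)^γ := Real.rpow_le_rpow hH.le (by linarith) hγ.le
      calc u ^ (-γ) = rexp ((-(s*γ))*t) * (H y)^γ := hrw
        _ ≤ rexp ((-(s*γ))*t) * (2:ℝ)^γ := by gcongr
        _ = (2:ℝ)^γ * rexp ((-(s*γ))*t) := mul_comm _ _
    have t1 : (1:ℝ) ≤ (2:ℝ)^γ * Eγ := by nlinarith
    have t2 : u ^ γ ≤ (2:ℝ)^γ * Eγ :=
      e1'.trans (mul_le_mul_of_nonneg_left hE1 (by positivity))
    have t3 : u ^ (-γ) ≤ (2:ℝ)^γ * Eγ :=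
      e2'.trans (mul_le_mul_of_nonneg_left hE2 (by positivity))
    calc |F3 u| + |F4 u| ≤ L * (1 + u ^ γ + u ^ (-γ)) := hb
      _ ≤ L * ((2:ℝ)^γ * Eγ + (2:ℝ)^γ * Eγ + (2:ℝ)^γ * Eγ) := by
          apply mul_le_mul_of_nonneg_left _ hL.le
          linarith
      _ = M * Eγ := by rw [hMdef]; ring
  -- bound on Ψ
  have hΨb : ∀ y : ℝ, 0 < y → Real.sqrt y ≤ 1 → 1/2 < H y → H y < 2 → ∀ t : ℝ,
      |3 * rexp (3*Real.sqrt y*t) * F3 (rexp (Real.sqrt y*t)/H y)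
        + rexp (4*Real.sqrt y*t)/H y * F4 (rexp (Real.sqrt y*t)/H y)| ≤
      (10*M) * (rexp ((4+γ)*t) + rexp (-((4+γ)*t))) := by
    intro y hy hs1 hHy1 hHy2 t
    set s := Real.sqrt y with hsdef
    have hs0 : 0 ≤ s := Real.sqrt_nonneg y
    have hH : 0 < H y := by linarith
    set u := rexp (s*t)/H y with hudef
    set Eγ := rexp (γ*t) + rexp (-(γ*t)) with hEγdef
    set Ea := rexp ((4+γ)*t) + rexp (-((4+γ)*t)) with hEadef
    have hEγ0 : 0 ≤ Eγ := by positivity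
    have hEa0 : 0 ≤ Ea := by positivity
    have hk := keyb y hy hs1 hHy1 hHy2 t
    rw [← hsdef, ← hudef, ← hEγdef] at hk
    have hF3u : |F3 u| ≤ M * Eγ := by
      have := abs_nonneg (F4 u); linarith
    have hF4u : |F4 u| ≤ M * Eγ := by
      have := abs_nonneg (F3 u); linarith
    have p1 : rexp (3*s*t) * Eγ ≤ 2 * Ea := by
      rw [hEγdef, hEadef, show (3:ℝ)*s*t = (3*s)*t by ring]
      exact exp_mul_E_le hγ.le (by rw [abs_of_nonneg (by positivity)]; nlinarith) t
    have p2 : rexp (4*s*t) * Eγ ≤ 2 * Ea := by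
      rw [hEγdef, hEadef, show (4:ℝ)*s*t = (4*s)*t by ring]
      exact exp_mul_E_le hγ.le (by rw [abs_of_nonneg (by positivity)]; nlinarith) t
    calc |3 * rexp (3*s*t) * F3 u + rexp (4*s*t)/H y * F4 u|
        ≤ |3 * rexp (3*s*t) * F3 u| + |rexp (4*s*t)/H y * F4 u| := abs_add_le _ _
      _ = 3 * rexp (3*s*t) * |F3 u| + rexp (4*s*t)/H y * |F4 u| := by
          simp only [abs_mul, abs_div, Real.abs_exp, abs_of_pos hH]
          norm_num
      _ ≤ 3 * rexp (3*s*t) * (M * Eγ) + 2 * rexp (4*s*t) * (M * Eγ) := by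
          have hd : rexp (4*s*t)/H y ≤ 2 * rexp (4*s*t) := by
            rw [div_le_iff₀ hH]
            nlinarith [Real.exp_pos (4*s*t)]
          have h4 := mul_le_mul hd hF4u (abs_nonneg _) (by positivity)
          have h3 := mul_le_mul_of_nonneg_left hF3u
            (by positivity : (0:ℝ) ≤ 3 * rexp (3*s*t))
          exact add_le_add h3 h4
      _ = 3 * M * (rexp (3*s*t) * Eγ) + 2 * M * (rexp (4*s*t) * Eγ) := by ring
      _ ≤ 3 * M * (2 * Ea) + 2 * M * (2 * Ea) := by
          have := mul_le_mul_of_nonneg_left p1 (by positivity : (0:ℝ) ≤ 3 * M)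
          have := mul_le_mul_of_nonneg_left p2 (by positivity : (0:ℝ) ≤ 2 * M)
          linarith [mul_le_mul_of_nonneg_left p1 (by positivity : (0:ℝ) ≤ 3 * M),
            mul_le_mul_of_nonneg_left p2 (by positivity : (0:ℝ) ≤ 2 * M)]
      _ = (10*M) * Ea := by ring
  -- eventual facts
  have hevH : ∀ᶠ y in 𝓝[>] (0:ℝ), H y ∈ Ioo (1/2:ℝ) 2 :=
    hHtend.eventually_mem (Ioo_mem_nhds (by norm_num) (by norm_num))
  have hev1 : ∀ᶠ y in 𝓝[>] (0:ℝ), y ≤ 1 :=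
    eventually_of_mem (nhdsWithin_le_nhds (Iic_mem_nhds (by norm_num : (0:ℝ) < 1)))
      fun y hy => hy
  have hev0 : ∀ᶠ y in 𝓝[>] (0:ℝ), 0 < y :=
    eventually_of_mem self_mem_nhdsWithin fun y hy => hy
  have hcF3 : ContinuousOn F3 (Ioi (0:ℝ)) :=
    fun x hx => (hdF3 x hx).continuousAt.continuousWithinAt
  have hsle1 : ∀ y : ℝ, y ≤ 1 → Real.sqrt y ≤ 1 := by
    intro y hy1
    rw [show (1:ℝ) = Real.sqrt 1 by rw [Real.sqrt_one]]
    exact Real.sqrt_le_sqrt (by linarith)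
  -- the eventual identity coming from Gaussian integration by parts
  have hmain : ∀ᶠ y in 𝓝[>] (0:ℝ),
      (2 * Real.sqrt y)⁻¹ *
        (∫ t, rexp (3*Real.sqrt y*t) * F3 (rexp (Real.sqrt y*t)/H y) * t ∂(gaussianReal 0 1))
      = (1/2) * ∫ t, (3 * rexp (3*Real.sqrt y*t) * F3 (rexp (Real.sqrt y*t)/H y)
          + rexp (4*Real.sqrt y*t)/H y * F4 (rexp (Real.sqrt y*t)/H y)) * gpdf t := by
    filter_upwards [hevH, hev1, hev0] with y hHy hy1 hy0
    obtain ⟨hHy1, hHy2⟩ := hHy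
    have hs0 : 0 < Real.sqrt y := Real.sqrt_pos.mpr hy0
    have hs1 : Real.sqrt y ≤ 1 := hsle1 y hy1
    have hH : 0 < H y := by linarith
    have hderiv : ∀ t : ℝ,
        HasDerivAt (fun t => rexp (3*Real.sqrt y*t) * F3 (rexp (Real.sqrt y*t)/H y))
        ((fun t => Real.sqrt y * (3 * rexp (3*Real.sqrt y*t) * F3 (rexp (Real.sqrt y*t)/H y)
          + rexp (4*Real.sqrt y*t)/H y * F4 (rexp (Real.sqrt y*t)/H y))) t) t := by
      intro t
      have h1 : HasDerivAt (fun t : ℝ => 3*Real.sqrt y*t) (3*Real.sqrt y) t := by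
        simpa using (hasDerivAt_id t).const_mul (3*Real.sqrt y)
      have h2 := h1.exp
      have h3 : HasDerivAt (fun t : ℝ => Real.sqrt y*t) (Real.sqrt y) t := by
        simpa using (hasDerivAt_id t).const_mul (Real.sqrt y)
      have h4 := (h3.exp).div_const (H y)
      have h5 := (hdF3 _ (div_pos (Real.exp_pos _) hH)).comp t h4
      have h6 := h2.mul h5
      refine h6.congr_deriv ?_
      simp only [Function.comp_apply]
      rw [show (4:ℝ)*Real.sqrt y*t = 3*Real.sqrt y*t + Real.sqrt y*t by ring, Real.exp_add]
      ring
    have hbound : ∀ t : ℝ, |rexp (3*Real.sqrt y*t) * F3 (rexp (Real.sqrt y*t)/H y)|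
        + |Real.sqrt y * (3 * rexp (3*Real.sqrt y*t) * F3 (rexp (Real.sqrt y*t)/H y)
          + rexp (4*Real.sqrt y*t)/H y * F4 (rexp (Real.sqrt y*t)/H y))| ≤
        (12*M) * (rexp ((4+γ)*t) + rexp (-((4+γ)*t))) := by
      intro t
      have hk := keyb y hy0 hs1 hHy1 hHy2 t
      have hΨ := hΨb y hy0 hs1 hHy1 hHy2 t
      have hF3u : |F3 (rexp (Real.sqrt y*t)/H y)| ≤ M * (rexp (γ*t) + rexp (-(γ*t))) := by
        have := abs_nonneg (F4 (rexp (Real.sqrt y*t)/H y)); linarith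
      have p1 : rexp (3*Real.sqrt y*t) * (rexp (γ*t) + rexp (-(γ*t))) ≤
          2 * (rexp ((4+γ)*t) + rexp (-((4+γ)*t))) := by
        rw [show (3:ℝ)*Real.sqrt y*t = (3*Real.sqrt y)*t by ring]
        apply exp_mul_E_le hγ.le _ t
        rw [abs_of_nonneg (by positivity)]
        nlinarith [Real.sqrt_nonneg y]
      have hg1 : |rexp (3*Real.sqrt y*t) * F3 (rexp (Real.sqrt y*t)/H y)| ≤
          2 * M * (rexp ((4+γ)*t) + rexp (-((4+γ)*t))) := by
        rw [abs_mul, Real.abs_exp]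
        calc rexp (3*Real.sqrt y*t) * |F3 (rexp (Real.sqrt y*t)/H y)|
            ≤ rexp (3*Real.sqrt y*t) * (M * (rexp (γ*t) + rexp (-(γ*t)))) :=
              mul_le_mul_of_nonneg_left hF3u (Real.exp_pos _).le
          _ = M * (rexp (3*Real.sqrt y*t) * (rexp (γ*t) + rexp (-(γ*t)))) := by ring
          _ ≤ M * (2 * (rexp ((4+γ)*t) + rexp (-((4+γ)*t)))) :=
              mul_le_mul_of_nonneg_left p1 hM.le
          _ = 2 * M * (rexp ((4+γ)*t) + rexp (-((4+γ)*t))) := by ring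
      have hg2 : |Real.sqrt y * (3 * rexp (3*Real.sqrt y*t) * F3 (rexp (Real.sqrt y*t)/H y)
          + rexp (4*Real.sqrt y*t)/H y * F4 (rexp (Real.sqrt y*t)/H y))| ≤
          (10*M) * (rexp ((4+γ)*t) + rexp (-((4+γ)*t))) := by
        rw [abs_mul, abs_of_nonneg hs0.le]
        calc Real.sqrt y * |3 * rexp (3*Real.sqrt y*t) * F3 (rexp (Real.sqrt y*t)/H y)
              + rexp (4*Real.sqrt y*t)/H y * F4 (rexp (Real.sqrt y*t)/H y)|
            ≤ 1 * |3 * rexp (3*Real.sqrt y*t) * F3 (rexp (Real.sqrt y*t)/H y)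
              + rexp (4*Real.sqrt y*t)/H y * F4 (rexp (Real.sqrt y*t)/H y)| :=
              mul_le_mul_of_nonneg_right hs1 (abs_nonneg _)
          _ = _ := one_mul _
          _ ≤ (10*M) * (rexp ((4+γ)*t) + rexp (-((4+γ)*t))) := hΨ
      linarith
    have hstein := stein hderiv (by positivity : (0:ℝ) ≤ 4+γ) hbound
    calc (2 * Real.sqrt y)⁻¹ *
          (∫ t, rexp (3*Real.sqrt y*t) * F3 (rexp (Real.sqrt y*t)/H y) * t ∂(gaussianReal 0 1))
        = (2 * Real.sqrt y)⁻¹ *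
          ∫ t, (rexp (3*Real.sqrt y*t) * F3 (rexp (Real.sqrt y*t)/H y) * t) * gpdf t := by
          rw [integral_gaussian_eq]
      _ = (2 * Real.sqrt y)⁻¹ *
          ∫ t, (Real.sqrt y * (3 * rexp (3*Real.sqrt y*t) * F3 (rexp (Real.sqrt y*t)/H y)
            + rexp (4*Real.sqrt y*t)/H y * F4 (rexp (Real.sqrt y*t)/H y))) * gpdf t := by
          have hstein' : (∫ t, (rexp (3*Real.sqrt y*t) * F3 (rexp (Real.sqrt y*t)/H y) * t)
                * gpdf t)
              = ∫ t, (Real.sqrt y * (3 * rexp (3*Real.sqrt y*t) * F3 (rexp (Real.sqrt y*t)/H y)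
                + rexp (4*Real.sqrt y*t)/H y * F4 (rexp (Real.sqrt y*t)/H y))) * gpdf t := hstein
          rw [hstein']
      _ = (2 * Real.sqrt y)⁻¹ *
          (Real.sqrt y * ∫ t, (3 * rexp (3*Real.sqrt y*t) * F3 (rexp (Real.sqrt y*t)/H y)
            + rexp (4*Real.sqrt y*t)/H y * F4 (rexp (Real.sqrt y*t)/H y)) * gpdf t) := by
          rw [show (fun t => (Real.sqrt y * (3 * rexp (3*Real.sqrt y*t)
                * F3 (rexp (Real.sqrt y*t)/H y)
                + rexp (4*Real.sqrt y*t)/H y * F4 (rexp (Real.sqrt y*t)/H y))) * gpdf t)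
              = fun t => Real.sqrt y * ((3 * rexp (3*Real.sqrt y*t)
                * F3 (rexp (Real.sqrt y*t)/H y)
                + rexp (4*Real.sqrt y*t)/H y * F4 (rexp (Real.sqrt y*t)/H y)) * gpdf t)
              from funext fun t => mul_assoc _ _ _]
          rw [integral_const_mul]
      _ = (1/2) * ∫ t, (3 * rexp (3*Real.sqrt y*t) * F3 (rexp (Real.sqrt y*t)/H y)
            + rexp (4*Real.sqrt y*t)/H y * F4 (rexp (Real.sqrt y*t)/H y)) * gpdf t := by
          rw [← mul_assoc]
          congr 1
          rw [mul_inv, mul_assoc, inv_mul_cancel₀ hs0.ne']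
          norm_num
  -- dominated convergence
  have hDCT : Tendsto (fun y => ∫ t, (3 * rexp (3*Real.sqrt y*t) * F3 (rexp (Real.sqrt y*t)/H y)
      + rexp (4*Real.sqrt y*t)/H y * F4 (rexp (Real.sqrt y*t)/H y)) * gpdf t)
      (𝓝[>] (0:ℝ)) (𝓝 (3 * F3 1 + F4 1)) := by
    have hlim : Tendsto (fun y => ∫ t, (3 * rexp (3*Real.sqrt y*t) * F3 (rexp (Real.sqrt y*t)/H y)
        + rexp (4*Real.sqrt y*t)/H y * F4 (rexp (Real.sqrt y*t)/H y)) * gpdf t)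
        (𝓝[>] (0:ℝ)) (𝓝 (∫ t, (3 * F3 1 + F4 1) * gpdf t)) := by
      apply tendsto_integral_filter_of_dominated_convergence
        (bound := fun t => (10*M) * ((rexp ((4+γ)*t) + rexp (-((4+γ)*t))) * gpdf t))
      · -- measurability
        filter_upwards [hevH, hev0] with y hHy hy0
        have hH : 0 < H y := by linarith [hHy.1]
        have hu : Continuous (fun t : ℝ => rexp (Real.sqrt y*t)/H y) :=
          (Real.continuous_exp.comp (continuous_const.mul continuous_id)).div_const _
        have hmaps : ∀ t : ℝ, rexp (Real.sqrt y*t)/H y ∈ Ioi (0:ℝ) :=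
          fun t => mem_Ioi.mpr (div_pos (Real.exp_pos _) hH)
        have hcf3 : Continuous (fun t : ℝ => F3 (rexp (Real.sqrt y*t)/H y)) :=
          hcF3.comp_continuous hu hmaps
        have hcf4 : Continuous (fun t : ℝ => F4 (rexp (Real.sqrt y*t)/H y)) :=
          hF4cont.comp_continuous hu hmaps
        have he3 : Continuous (fun t : ℝ => rexp (3*Real.sqrt y*t)) :=
          Real.continuous_exp.comp (continuous_const.mul continuous_id)
        have he4 : Continuous (fun t : ℝ => rexp (4*Real.sqrt y*t)/H y) :=
          (Real.continuous_exp.comp (continuous_const.mul continuous_id)).div_const _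
        exact ((((continuous_const.mul he3).mul hcf3).add (he4.mul hcf4)).mul
          continuous_gpdf).aestronglyMeasurable
      · -- bound
        filter_upwards [hevH, hev1, hev0] with y hHy hy1 hy0
        refine Eventually.of_forall fun t => ?_
        have hΨ := hΨb y hy0 (hsle1 y hy1) hHy.1 hHy.2 t
        rw [Real.norm_eq_abs, abs_mul, abs_of_nonneg (gpdf_nonneg t)]
        calc |3 * rexp (3*Real.sqrt y*t) * F3 (rexp (Real.sqrt y*t)/H y)
              + rexp (4*Real.sqrt y*t)/H y * F4 (rexp (Real.sqrt y*t)/H y)| * gpdf t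
            ≤ ((10*M) * (rexp ((4+γ)*t) + rexp (-((4+γ)*t)))) * gpdf t :=
              mul_le_mul_of_nonneg_right hΨ (gpdf_nonneg t)
          _ = (10*M) * ((rexp ((4+γ)*t) + rexp (-((4+γ)*t))) * gpdf t) := by ring
      · exact (integrable_E_gpdf (4+γ)).const_mul (10*M)
      · refine Eventually.of_forall fun t => ?_
        have h0 : Tendsto (fun y : ℝ => Real.sqrt y * t) (𝓝[>] (0:ℝ)) (𝓝 0) := by
          simpa using hsqt.mul_const t
        have h3t : Tendsto (fun y : ℝ => 3 * Real.sqrt y * t) (𝓝[>] (0:ℝ)) (𝓝 0) := by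
          have := ((hsqt.const_mul (3:ℝ)).mul_const t)
          simpa [mul_assoc] using this
        have h4t : Tendsto (fun y : ℝ => 4 * Real.sqrt y * t) (𝓝[>] (0:ℝ)) (𝓝 0) := by
          have := ((hsqt.const_mul (4:ℝ)).mul_const t)
          simpa [mul_assoc] using this
        have he1 : Tendsto (fun y : ℝ => rexp (Real.sqrt y * t)) (𝓝[>] (0:ℝ)) (𝓝 1) := by
          have := (Real.continuous_exp.tendsto 0).comp h0
          simpa [Function.comp_def] using this
        have he3 : Tendsto (fun y : ℝ => rexp (3 * Real.sqrt y * t)) (𝓝[>] (0:ℝ)) (𝓝 1) := by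
          have := (Real.continuous_exp.tendsto 0).comp h3t
          simpa [Function.comp_def] using this
        have he4 : Tendsto (fun y : ℝ => rexp (4 * Real.sqrt y * t)) (𝓝[>] (0:ℝ)) (𝓝 1) := by
          have := (Real.continuous_exp.tendsto 0).comp h4t
          simpa [Function.comp_def] using this
        have hu : Tendsto (fun y : ℝ => rexp (Real.sqrt y * t)/H y) (𝓝[>] (0:ℝ)) (𝓝 1) := by
          have := he1.div hHtend one_ne_zero
          simpa [Pi.div_def] using this
        have hF3t : Tendsto (fun y : ℝ => F3 (rexp (Real.sqrt y * t)/H y)) (𝓝[>] (0:ℝ))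
            (𝓝 (F3 1)) := ((hdF3 1 one_pos).continuousAt.tendsto).comp hu
        have hF4t : Tendsto (fun y : ℝ => F4 (rexp (Real.sqrt y * t)/H y)) (𝓝[>] (0:ℝ))
            (𝓝 (F4 1)) := ((hF4cont.continuousAt (Ioi_mem_nhds one_pos)).tendsto).comp hu
        have he4H : Tendsto (fun y : ℝ => rexp (4 * Real.sqrt y * t)/H y) (𝓝[>] (0:ℝ))
            (𝓝 1) := by
          have := he4.div hHtend one_ne_zero
          simpa [Pi.div_def] using this
        have hcomb := ((((tendsto_const_nhds (x := (3:ℝ))).mul he3).mul hF3t).add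
          (he4H.mul hF4t)).mul_const (gpdf t)
        simpa using hcomb
    have hval : ∫ t, (3 * F3 1 + F4 1) * gpdf t = 3 * F3 1 + F4 1 := by
      rw [integral_const_mul]
      have h1 : ∫ t, gpdf t = 1 := integral_gaussianPDFReal_eq_one 0 one_ne_zero
      rw [h1, mul_one]
    rwa [hval] at hlim
  -- conclude
  have hhalf := hDCT.const_mul (1/2 : ℝ)
  rw [show (3/2) * F3 1 + (1/2) * F4 1 = (1/2) * (3 * F3 1 + F4 1) by ring]
  exact Tendsto.congr' (by filter_upwards [hmain] with y h using h.symm) hhalf
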